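/- arXiv:1308.1900 — 4 statements merged into one kernel-verified Lean document; each statement's English description precedes it below -/
import Mathlib

section
/- Let (Ω,F,P) be a measure space, P₀ and P₁ two probability measures with P₁ absolutely continuous with respect to P₀, and let L = dP₁/dP₀ be the Radon–Nikodym derivative. Fix c > 0 and set R* = {L ≥ c}. Then for every measurable set R with P₀(R) ≤ P₀(R*), one has P₁(R) ≤ P₁(R*). -/
/-!
Write `P₁ = L • P₀`. On `R \ R*` the density `L` is below `c`, on `R* \ R` it is at least `c`, and
`P₀ (R \ R*) ≤ P₀ (R* \ R)` because `P₀ R ≤ P₀ R*`. Hence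
`P₁ (R \ R*) ≤ c P₀ (R \ R*) ≤ c P₀ (R* \ R) ≤ P₁ (R* \ R)`, and adding `P₁ (R ∩ R*)` to both
ends gives `P₁ R ≤ P₁ R*`.
-/

open MeasureTheory
open scoped ENNReal

namespace MeasureTheory

variable {α : Type*} [MeasurableSpace α] {μ : Measure α}

theorem measure_sdiff_le_measure_sdiff_of_le {s t : Set α} (hs : MeasurableSet s)
    (ht : MeasurableSet t) (hs_fin : μ s ≠ ∞) (hst : μ s ≤ μ t) : μ (s \ t) ≤ μ (t \ s) := by
  have h_inter_fin : μ (s ∩ t) ≠ ∞ := measure_ne_top_of_subset Set.inter_subset_left hs_fin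
  rw [← ENNReal.add_le_add_iff_left h_inter_fin, measure_inter_add_sdiff s ht, Set.inter_comm,
    measure_inter_add_sdiff t hs]
  exact hst

theorem setLIntegral_le_setLIntegral_superlevel_of_measure_le {f : α → ℝ≥0∞} (hf : Measurable f)
    (c : ℝ≥0∞) {R : Set α} (hR : MeasurableSet R) (hR_fin : μ R ≠ ∞)
    (hle : μ R ≤ μ {x | c ≤ f x}) :
    ∫⁻ x in R, f x ∂μ ≤ ∫⁻ x in {x | c ≤ f x}, f x ∂μ := by
  set S := {x | c ≤ f x}
  have hS : MeasurableSet S := hf measurableSet_Ici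
  have h_below : ∫⁻ x in R \ S, f x ∂μ ≤ c * μ (R \ S) := by
    rw [← setLIntegral_const]
    exact setLIntegral_mono measurable_const fun x hx ↦ (not_le.mp hx.2).le
  have h_above : c * μ (S \ R) ≤ ∫⁻ x in S \ R, f x ∂μ := by
    rw [← setLIntegral_const]
    exact setLIntegral_mono hf fun x hx ↦ hx.1
  have h_sdiff : μ (R \ S) ≤ μ (S \ R) :=
    measure_sdiff_le_measure_sdiff_of_le hR hS hR_fin hle
  calc ∫⁻ x in R, f x ∂μ
      = ∫⁻ x in S ∩ R, f x ∂μ + ∫⁻ x in R \ S, f x ∂μ := by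
        rw [Set.inter_comm, lintegral_inter_add_sdiff f R hS]
    _ ≤ ∫⁻ x in S ∩ R, f x ∂μ + ∫⁻ x in S \ R, f x ∂μ :=
        add_le_add le_rfl (h_below.trans ((mul_le_mul_right h_sdiff c).trans h_above))
    _ = ∫⁻ x in S, f x ∂μ := lintegral_inter_add_sdiff f S hR

end MeasureTheory

theorem neyman_pearson_general {Ω : Type*} [MeasurableSpace Ω]
    (P₀ P₁ : Measure Ω) [IsProbabilityMeasure P₀] [IsProbabilityMeasure P₁]
    (hac : P₁ ≪ P₀) (c : ℝ≥0∞)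
    (Rstar : Set Ω) (hRstar : Rstar = {ω | c ≤ P₁.rnDeriv P₀ ω})
    (R : Set Ω) (hR : MeasurableSet R) (hle : P₀ R ≤ P₀ Rstar) :
    P₁ R ≤ P₁ Rstar := by
  subst hRstar
  rw [← Measure.setLIntegral_rnDeriv hac R, ← Measure.setLIntegral_rnDeriv hac]
  exact setLIntegral_le_setLIntegral_superlevel_of_measure_le (Measure.measurable_rnDeriv P₁ P₀)
    c hR (measure_ne_top P₀ R) hle

theorem neyman_pearson {Ω : Type*} [MeasurableSpace Ω]
    (P₀ P₁ : Measure Ω) [IsProbabilityMeasure P₀] [IsProbabilityMeasure P₁]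
    (hac : P₁ ≪ P₀) (c : ℝ≥0∞) (hc : 0 < c)
    (Rstar : Set Ω) (hRstar : Rstar = {ω | c ≤ P₁.rnDeriv P₀ ω})
    (R : Set Ω) (hR : MeasurableSet R) (hle : P₀ R ≤ P₀ Rstar) :
    P₁ R ≤ P₁ Rstar :=
  neyman_pearson_general P₀ P₁ hac c Rstar hRstar R hR hle
end

section
/- Fix θ₁ > θ₀ > 0 and M > 0, and let c(ε) = (M/2)·(−√(ε(θ₁²−θ₀²)+θ₁²) + ε(θ₁−θ₀) + θ₁) for ε > ε₋ := −θ₁²/(θ₁²−θ₀²), and c(ε)=+∞ otherwise. Then for every η < (θ₁−θ₀)M/2, the Legendre–Fenchel transform I(η) = sup_{ε>ε₋} (εη − c(ε)) equals −(4θ₁η − (θ₁−θ₀)²M)² / (8(2η − (θ₁−θ₀)M)(θ₁²−θ₀²)), and for η ≥ (θ₁−θ₀)M/2 the supremum is +∞. -/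
/-!
Substituting `u = √(ε (θ₁² - θ₀²) + θ₁²)` maps `ε > ε₋` bijectively onto `u > 0`, and turns
`ε η - c ε` into a quadratic in `u` with linear coefficient `M/2` and leading coefficient
`p = (2η - (θ₁ - θ₀) M) / (2 (θ₁² - θ₀²))`. For `p < 0` its supremum over `u > 0` is its value at
the vertex `u = -M / (4p) > 0`; for `p ≥ 0` it grows without bound.
-/

open Set

lemma image_sqrt_mul_add_Ioi {D b : ℝ} (hD : 0 < D) :
    (fun ε => √(ε * D + b)) '' Ioi (-b / D) = Ioi 0 := by
  ext u
  constructor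
  · rintro ⟨ε, hε, rfl⟩
    have : -b < ε * D := (div_lt_iff₀ hD).mp hε
    exact Real.sqrt_pos.mpr (by linarith)
  · intro (hu : 0 < u)
    refine ⟨(u ^ 2 - b) / D, ?_, ?_⟩
    · exact div_lt_div_of_pos_right (by nlinarith) hD
    · simp only [div_mul_cancel₀ _ hD.ne', sub_add_cancel, Real.sqrt_sq hu.le]

lemma isGreatest_quadratic_image_Ioi {p q r : ℝ} (hp : p < 0) (hq : 0 < q) :
    IsGreatest ((fun u => p * u ^ 2 + q * u + r) '' Ioi 0) (r - q ^ 2 / (4 * p)) := by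
  have hp0 : p ≠ 0 := hp.ne
  refine ⟨⟨-q / (2 * p), div_pos_of_neg_of_neg (neg_neg_of_pos hq) (by linarith), ?_⟩, ?_⟩
  · field_simp
    ring
  · rintro _ ⟨u, -, rfl⟩
    have vertex_form : p * u ^ 2 + q * u + r = r - q ^ 2 / (4 * p) + p * (u + q / (2 * p)) ^ 2 := by
      field_simp
      ring
    show p * u ^ 2 + q * u + r ≤ _
    rw [vertex_form]
    nlinarith [sq_nonneg (u + q / (2 * p))]

lemma not_bddAbove_quadratic_image_Ioi {p q r : ℝ} (hp : 0 ≤ p) (hq : 0 < q) :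
    ¬ BddAbove ((fun u => p * u ^ 2 + q * u + r) '' Ioi 0) := by
  rintro ⟨b, hb⟩
  set u := max 1 ((b - r) / q + 1)
  have hu : (b - r) / q + 1 ≤ u := le_max_right _ _
  have hu_pos : 0 < u := lt_of_lt_of_le one_pos (le_max_left _ _)
  have hle : p * u ^ 2 + q * u + r ≤ b := hb ⟨u, hu_pos, rfl⟩
  have hqu : b - r + q ≤ q * u := by
    calc b - r + q = q * ((b - r) / q + 1) := by field_simp
      _ ≤ q * u := mul_le_mul_of_nonneg_left hu hq.le
  nlinarith [mul_nonneg hp (sq_nonneg u)]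

theorem legendre_fenchel_transform_of_cgf (θ₀ θ₁ M : ℝ)
    (h0 : 0 < θ₀) (h1 : θ₀ < θ₁) (hM : 0 < M) :
    let εminus : ℝ := -θ₁^2/(θ₁^2-θ₀^2)
    let c : ℝ → ℝ := fun ε =>
      (M/2) * (-Real.sqrt (ε*(θ₁^2-θ₀^2)+θ₁^2) + ε*(θ₁-θ₀) + θ₁)
    (∀ η : ℝ, η < (θ₁-θ₀)*M/2 →
      sSup {x : ℝ | ∃ ε, εminus < ε ∧ x = ε*η - c ε}
        = -(4*θ₁*η - (θ₁-θ₀)^2*M)^2 / (8*(2*η-(θ₁-θ₀)*M)*(θ₁^2-θ₀^2))) ∧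
    (∀ η : ℝ, (θ₁-θ₀)*M/2 ≤ η →
      ¬ BddAbove {x : ℝ | ∃ ε, εminus < ε ∧ x = ε*η - c ε}) := by
  intro εminus c
  set D := θ₁ ^ 2 - θ₀ ^ 2
  have hD : 0 < D := by nlinarith
  have reparam : ∀ η, {x : ℝ | ∃ ε, εminus < ε ∧ x = ε * η - c ε} =
      (fun u => (2 * η - (θ₁ - θ₀) * M) / (2 * D) * u ^ 2 + M / 2 * u
        + -((2 * η - (θ₁ - θ₀) * M) / (2 * D) * θ₁ ^ 2 + M / 2 * θ₁)) '' Ioi 0 := by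
    intro η
    rw [← image_sqrt_mul_add_Ioi hD, image_image]
    ext x
    refine exists_congr fun ε => and_congr_right fun hε => ?_
    have hu : √(ε * D + θ₁ ^ 2) ^ 2 = ε * D + θ₁ ^ 2 :=
      Real.sq_sqrt (by linarith [(div_lt_iff₀ hD).mp hε])
    beta_reduce
    rw [hu, eq_comm]
    congr! 1
    simp only [c]
    field_simp
    ring
  refine ⟨fun η hη => ?_, fun η hη => ?_⟩
  · rw [reparam, (isGreatest_quadratic_image_Ioi
      (div_neg_of_neg_of_pos (by linarith) (by positivity)) (half_pos hM)).csSup_eq]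
    have : 2 * η - (θ₁ - θ₀) * M ≠ 0 := by linarith
    field_simp
    ring
  · rw [reparam]
    exact not_bddAbove_quadratic_image_Ioi (div_nonneg (by linarith) (by positivity)) (half_pos hM)
end

section
/- Fix θ₁ > θ₀ > 0 and M > 0, let 𝓛(ε) = (M/2)·(θ₁ + (θ₁−θ₀)ε − √(θ₁² + (θ₁²−θ₀²)ε)), and let ε_η be the solution of 𝓛'(ε_η) = η for η < (θ₁−θ₀)²M/(4θ₁). Then 𝓛''(ε_η) = (−2η + (θ₁−θ₀)M)³ / ((θ₁²−θ₀²)M²). -/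
/-! With `a = θ₁ - θ₀`, `c = θ₁² - θ₀²` and `s = √(θ₁² + c ε)` one has
`L' = (M/2) (a - c / (2 s))` and `L'' = M c² / (8 s³)`. The equation `L'(ε) = η` says
`a M - 2 η = M c / (2 s)`, and eliminating `s` from `L''` gives the formula. -/

open Filter Topology

section AffineSubSqrtAffine

variable (m p a q c : ℝ)

theorem hasDerivAt_affine_sub_sqrt_affine {x : ℝ} (hx : q + c * x ≠ 0) :
    HasDerivAt (fun y => m * (p + a * y - √(q + c * y)))
      (m * (a - c / (2 * √(q + c * x)))) x := by
  have hinner : HasDerivAt (fun y => q + c * y) c x := by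
    simpa using ((hasDerivAt_id x).const_mul c).const_add q
  have hlin : HasDerivAt (fun y => p + a * y) a x := by
    simpa using ((hasDerivAt_id x).const_mul a).const_add p
  exact ((hlin.sub (hinner.sqrt hx)).const_mul m)

theorem deriv_affine_sub_sqrt_affine_eventuallyEq {x : ℝ} (hx : 0 < q + c * x) :
    deriv (fun y => m * (p + a * y - √(q + c * y))) =ᶠ[𝓝 x]
      fun y => m * (a - c / (2 * √(q + c * y))) := by
  have hopen : IsOpen {y : ℝ | 0 < q + c * y} :=
    isOpen_lt continuous_const (by fun_prop)
  filter_upwards [hopen.mem_nhds hx] with y hy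
  exact (hasDerivAt_affine_sub_sqrt_affine m p a q c (ne_of_gt hy)).deriv

theorem deriv_deriv_affine_sub_sqrt_affine {x : ℝ} (hx : 0 < q + c * x) :
    deriv (deriv fun y => m * (p + a * y - √(q + c * y))) x =
      m * c ^ 2 / (4 * √(q + c * x) ^ 3) := by
  rw [(deriv_affine_sub_sqrt_affine_eventuallyEq m p a q c hx).deriv_eq]
  have hinner : HasDerivAt (fun y => q + c * y) c x := by
    simpa using ((hasDerivAt_id x).const_mul c).const_add q
  have htwo_sqrt : HasDerivAt (fun y => 2 * √(q + c * y)) (2 * (c / (2 * √(q + c * x)))) x :=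
    (hinner.sqrt hx.ne').const_mul 2
  have hquot := ((hasDerivAt_const x c).div htwo_sqrt (by positivity)).const_sub a |>.const_mul m
  refine hquot.deriv.trans ?_
  field_simp
  ring

theorem deriv_deriv_affine_sub_sqrt_affine_of_deriv_eq {x η : ℝ} (hx : 0 < q + c * x)
    (hc : c ≠ 0) (hη : deriv (fun y => m * (p + a * y - √(q + c * y))) x = η) :
    deriv (deriv fun y => m * (p + a * y - √(q + c * y))) x = 2 * (a * m - η) ^ 3 / (m ^ 2 * c) := by
  rcases eq_or_ne m 0 with rfl | hm
  · simp
  rw [(hasDerivAt_affine_sub_sqrt_affine m p a q c hx.ne').deriv] at hη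
  rw [deriv_deriv_affine_sub_sqrt_affine m p a q c hx, ← hη]
  field_simp
  ring

end AffineSubSqrtAffine

theorem second_derivative_at_tilting_point_general (θ₀ θ₁ M : ℝ)
    (h0 : 0 < θ₀) (h1 : θ₀ < θ₁)
    (L : ℝ → ℝ)
    (hL : L = fun ε : ℝ =>
      (M/2) * (θ₁ + (θ₁-θ₀)*ε - Real.sqrt (θ₁^2 + (θ₁^2-θ₀^2)*ε)))
    (η : ℝ)
    (ε : ℝ) (hε : -θ₁^2/(θ₁^2-θ₀^2) < ε) (hsol : deriv L ε = η) :
    deriv (deriv L) ε = (-2*η + (θ₁-θ₀)*M)^3 / ((θ₁^2-θ₀^2)*M^2) := by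
  set c := θ₁ ^ 2 - θ₀ ^ 2
  have hc : 0 < c := by nlinarith
  have hx : 0 < θ₁ ^ 2 + c * ε := by
    have := (div_lt_iff₀ hc).mp hε
    linarith
  subst hL
  rw [deriv_deriv_affine_sub_sqrt_affine_of_deriv_eq _ _ _ _ _ hx hc.ne' hsol]
  ring_nf

theorem second_derivative_at_tilting_point (θ₀ θ₁ M : ℝ)
    (h0 : 0 < θ₀) (h1 : θ₀ < θ₁) (hM : 0 < M)
    (L : ℝ → ℝ)
    (hL : L = fun ε : ℝ =>
      (M/2) * (θ₁ + (θ₁-θ₀)*ε - Real.sqrt (θ₁^2 + (θ₁^2-θ₀^2)*ε)))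
    (η : ℝ) (hη : η < (θ₁-θ₀)^2*M/(4*θ₁))
    (ε : ℝ) (hε : -θ₁^2/(θ₁^2-θ₀^2) < ε) (hsol : deriv L ε = η) :
    deriv (deriv L) ε = (-2*η + (θ₁-θ₀)*M)^3 / ((θ₁^2-θ₀^2)*M^2) :=
  second_derivative_at_tilting_point_general θ₀ θ₁ M h0 h1 L hL η ε hε hsol
end

section
/- Let λ_k, k ≥ 1, be positive reals with λ_k² ~ ϖ k^{2/d} as k → ∞ (ϖ > 0, d ≥ 1), let β > 0, σ > 0, θ > 0, T > 0, and set V_k = (σ²T/(2θ))λ_k^{2β} − (σ²/(4θ²))(1 − e^{−2θλ_k^{2β}T}) and M_N = Σ_{k=1}^N λ_k^{2β}. Then lim_{N→∞} M_N^{−1} Σ_{k=1}^N V_k = σ²T/(2θ). -/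
/-!
With `a k = λ_k^{2β}`, the summand is `V_k = c a_k + O(1)` for `c = σ²T/(2θ)`, because
`0 ≤ 1 - e^{-2θ a_k T} ≤ 1`. The growth assumption gives `a_k → ∞`, so the bounded error is
`o(a_k)`, and a Cesàro-type summation of little-o relations turns this into
`∑ V_k = c ∑ a_k + o(∑ a_k)`.
-/

open Filter Finset Asymptotics Topology

theorem Finset.sum_Icc_one_eq_sum_range_succ {M : Type*} [AddCommMonoid M] (f : ℕ → M) (n : ℕ) :
    ∑ i ∈ Icc 1 n, f i = ∑ i ∈ range n, f (i + 1) := by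
  rw [range_eq_Ico, sum_Ico_add', zero_add, Ico_add_one_right_eq_Icc]

theorem tendsto_sum_Icc_one_atTop_of_tendsto_atTop {a : ℕ → ℝ} (h0 : ∀ k, 0 ≤ a k)
    (ha : Tendsto a atTop atTop) : Tendsto (fun n => ∑ i ∈ Icc 1 n, a i) atTop atTop := by
  simp only [sum_Icc_one_eq_sum_range_succ]
  exact (not_summable_iff_tendsto_nat_atTop_of_nonneg fun k => h0 (k + 1)).1 fun hs =>
    not_tendsto_nhds_of_tendsto_atTop (ha.comp (tendsto_add_atTop_nat 1)) 0
      hs.tendsto_atTop_zero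

theorem Asymptotics.IsLittleO.sum_Icc_one {f g : ℕ → ℝ} (h : f =o[atTop] g) (hg : ∀ k, 0 ≤ g k)
    (hg' : Tendsto (fun n => ∑ i ∈ Icc 1 n, g i) atTop atTop) :
    (fun n => ∑ i ∈ Icc 1 n, f i) =o[atTop] fun n => ∑ i ∈ Icc 1 n, g i := by
  simp only [sum_Icc_one_eq_sum_range_succ] at hg' ⊢
  exact (h.comp_tendsto (tendsto_add_atTop_nat 1)).sum_range (fun k => hg (k + 1)) hg'

theorem tendsto_sum_Icc_div_sum_Icc_of_sub_isBigO_one {a b : ℕ → ℝ} {c : ℝ}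
    (ha0 : ∀ k, 0 ≤ a k) (ha : Tendsto a atTop atTop)
    (hb : (fun k => b k - c * a k) =O[atTop] fun _ => (1 : ℝ)) :
    Tendsto (fun N => (∑ k ∈ Icc 1 N, b k) / ∑ k ∈ Icc 1 N, a k) atTop (𝓝 c) := by
  have hsum := tendsto_sum_Icc_one_atTop_of_tendsto_atTop ha0 ha
  have herr : (fun k => b k - c * a k) =o[atTop] a :=
    hb.trans_isLittleO ((isLittleO_one_left_iff ℝ).2 (tendsto_abs_atTop_atTop.comp ha))
  have hlim := ((herr.sum_Icc_one ha0 hsum).tendsto_div_nhds_zero).const_add c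
  rw [add_zero] at hlim
  refine hlim.congr' ?_
  filter_upwards [hsum.eventually_gt_atTop 0] with N hN
  rw [sum_sub_distrib, ← mul_sum]
  field_simp
  ring

theorem tendsto_atTop_of_div_tendsto_pos {α : Type*} {l : Filter α} {u v : α → ℝ} {ϖ : ℝ}
    (hϖ : 0 < ϖ) (h : Tendsto (fun x => u x / v x) l (𝓝 ϖ)) (hv : Tendsto v l atTop) :
    Tendsto u l atTop :=
  (h.pos_mul_atTop hϖ hv).congr' <| (hv.eventually_gt_atTop 0).mono fun _ hx =>
    div_mul_cancel₀ _ hx.ne'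

theorem cesaro_variance_limit_general (lam : ℕ → ℝ) (hpos : ∀ k, 0 < lam k)
    (ϖ : ℝ) (hϖ : 0 < ϖ) (d : ℕ) (hd : 1 ≤ d)
    (hasym : Tendsto (fun k : ℕ => (lam k)^2 / (k:ℝ)^((2:ℝ)/(d:ℝ))) atTop (nhds ϖ))
    (β σ θ T : ℝ) (hβ : 0 < β) (hθ : 0 < θ) (hT : 0 < T) :
    Tendsto (fun N : ℕ =>
        (∑ k ∈ Finset.Icc 1 N,
          ((σ^2*T/(2*θ)) * (lam k)^(2*β)
            - (σ^2/(4*θ^2)) * (1 - Real.exp (-2*θ*(lam k)^(2*β)*T))))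
          / (∑ k ∈ Finset.Icc 1 N, (lam k)^(2*β)))
      atTop (nhds (σ^2*T/(2*θ))) := by
  have hlam_sq : Tendsto (fun k => lam k ^ 2) atTop atTop :=
    tendsto_atTop_of_div_tendsto_pos hϖ hasym <|
      (tendsto_rpow_atTop (by positivity)).comp tendsto_natCast_atTop_atTop
  have hlam : Tendsto (fun k => lam k ^ (2 * β)) atTop atTop := by
    refine ((tendsto_rpow_atTop hβ).comp hlam_sq).congr fun k => ?_
    rw [Function.comp_apply, ← Real.rpow_natCast, ← Real.rpow_mul (hpos k).le]
    norm_num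
  refine tendsto_sum_Icc_div_sum_Icc_of_sub_isBigO_one
    (fun k => (Real.rpow_pos_of_pos (hpos k) _).le) hlam ?_
  refine IsBigO.of_bound (σ ^ 2 / (4 * θ ^ 2)) (Eventually.of_forall fun k => ?_)
  have hexp_le : Real.exp (-2 * θ * lam k ^ (2 * β) * T) ≤ 1 := by
    rw [Real.exp_le_one_iff]
    nlinarith [mul_pos (mul_pos hθ (Real.rpow_pos_of_pos (hpos k) (2 * β))) hT]
  have hexp_pos := Real.exp_pos (-2 * θ * lam k ^ (2 * β) * T)
  rw [sub_sub_cancel_left, norm_neg, norm_mul, Real.norm_of_nonneg (by positivity),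
    Real.norm_of_nonneg (by linarith), norm_one, mul_one]
  exact mul_le_of_le_one_right (by positivity) (by linarith)

theorem cesaro_variance_limit (lam : ℕ → ℝ) (hpos : ∀ k, 0 < lam k)
    (ϖ : ℝ) (hϖ : 0 < ϖ) (d : ℕ) (hd : 1 ≤ d)
    (hasym : Tendsto (fun k : ℕ => (lam k)^2 / (k:ℝ)^((2:ℝ)/(d:ℝ))) atTop (nhds ϖ))
    (β σ θ T : ℝ) (hβ : 0 < β) (hσ : 0 < σ) (hθ : 0 < θ) (hT : 0 < T) :
    Tendsto (fun N : ℕ =>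
        (∑ k ∈ Finset.Icc 1 N,
          ((σ^2*T/(2*θ)) * (lam k)^(2*β)
            - (σ^2/(4*θ^2)) * (1 - Real.exp (-2*θ*(lam k)^(2*β)*T))))
          / (∑ k ∈ Finset.Icc 1 N, (lam k)^(2*β)))
      atTop (nhds (σ^2*T/(2*θ))) :=
  cesaro_variance_limit_general lam hpos ϖ hϖ d hd hasym β σ θ T hβ hθ hT
end
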